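/- The bipartite incidence graph G_q of PG(2,q) is two-side k-pairable whenever k ≤ (q+4)/5: for any 2k points u_1, v_1, ..., u_k, v_k of PG(2,q), the pairing graph on these 2k vertices with edges (u_i, v_i) is a vertex-minor of G_q, and symmetrically for any 2k lines. -/

import Mathlib

variable {V : Type*}

/-- Local complementation at `v`: toggle edges within the neighborhood of `v`. -/
def localComp (G : SimpleGraph V) (v : V) : SimpleGraph V where
  Adj x y := x ≠ y ∧ Xor' (G.Adj x y) (G.Adj v x ∧ G.Adj v y)
  symm := by
    constructor
    rintro x y ⟨hxy, h⟩
    refine ⟨hxy.symm, ?_⟩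
    have := G.adj_comm x y
    unfold Xor' at *
    unfold Xor at *
    tauto
  loopless := by constructor; rintro x ⟨h, -⟩; exact h rfl

/-- Deletion of vertex `v`. -/
def deleteVert (G : SimpleGraph V) (v : V) : SimpleGraph V where
  Adj x y := G.Adj x y ∧ x ≠ v ∧ y ≠ v
  symm := by constructor; rintro x y ⟨h, hx, hy⟩; exact ⟨h.symm, hy, hx⟩
  loopless := by constructor; rintro x ⟨h, -⟩; exact G.loopless.irrefl x h

/-- One step: either local complementation at a vertex of the current vertex set,
or deletion of a vertex of the current vertex set. -/
inductive VMStep : SimpleGraph V × Set V → SimpleGraph V × Set V → Prop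
  | lc (G : SimpleGraph V) (S : Set V) (v : V) (hv : v ∈ S) :
      VMStep (G, S) (localComp G v, S)
  | del (G : SimpleGraph V) (S : Set V) (v : V) (hv : v ∈ S) :
      VMStep (G, S) (deleteVert G v, S \ {v})

/-- `H` (a graph on vertex set `KH`) is a vertex-minor of `G` (a graph on vertex set `KG`). -/
def IsVertexMinor (H : SimpleGraph V) (KH : Set V) (G : SimpleGraph V) (KG : Set V) : Prop :=
  Relation.ReflTransGen VMStep (G, KG) (H, KH)

/-- The pairing graph with edges `(u i, v i)`. -/
def pairingGraph {k : ℕ} (u v : Fin k → V) : SimpleGraph V where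
  Adj x y := x ≠ y ∧ ∃ i, (x = u i ∧ y = v i) ∨ (x = v i ∧ y = u i)
  symm := by constructor; rintro x y ⟨h, i, hi⟩; exact ⟨h.symm, i, by tauto⟩
  loopless := by constructor; rintro x ⟨h, -⟩; exact h rfl

/-- Points of PG(2,q): 1-dimensional subspaces of F^3. -/
def ProjPoint (F : Type*) [Field F] : Type _ :=
  {p : Submodule F (Fin 3 → F) // Module.finrank F p = 1}

/-- Lines of PG(2,q): 2-dimensional subspaces of F^3. -/
def ProjLine (F : Type*) [Field F] : Type _ :=
  {l : Submodule F (Fin 3 → F) // Module.finrank F l = 2}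

variable (F : Type*) [Field F]

/-- Bipartite incidence graph of PG(2,q). -/
def incGraph : SimpleGraph (ProjPoint F ⊕ ProjLine F) where
  Adj x y :=
    (∃ p l, x = Sum.inl p ∧ y = Sum.inr l ∧ p.val ≤ l.val) ∨
    (∃ p l, x = Sum.inr l ∧ y = Sum.inl p ∧ p.val ≤ l.val)
  symm := by
    constructor
    rintro x y (⟨p, l, rfl, rfl, h⟩ | ⟨p, l, rfl, rfl, h⟩)
    · exact Or.inr ⟨p, l, rfl, rfl, h⟩
    · exact Or.inl ⟨p, l, rfl, rfl, h⟩
  loopless := by constructor; rintro x (⟨p, l, h1, h2, -⟩ | ⟨p, l, h1, h2, -⟩) <;> simp_all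

/-- Orthogonality graph on points of PG(2,q). -/
def orthGraph : SimpleGraph (ProjPoint F) where
  Adj a b := a ≠ b ∧ ∀ x ∈ a.val, ∀ y ∈ b.val, dotProduct x y = 0
  symm := by
    constructor
    rintro a b ⟨hne, h⟩
    exact ⟨hne.symm, fun x hx y hy => by rw [dotProduct_comm]; exact h y hy x hx⟩
  loopless := by constructor; rintro a ⟨h, -⟩; exact h rfl

/-!
Fix a line `M` avoiding all `2k` prescribed points; it exists because these points lie on at
most `2k(q + 1) < q² + q + 1` lines. For a pair `(u, v)` call a point `w ∈ M` a detour if the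
lines `uw` and `wv` contain no other prescribed point. Each of the at most `4k - 3` lines joining
`u` or `v` to another prescribed point meets `M` once, so at least `q + 4 - 4k ≥ k` points of `M`
are detours, and Hall's theorem picks distinct detours `w i` for all pairs. The points
`u i, w i, v i` and the lines `a i = u i w i`, `c i = w i v i` then induce `k` disjoint paths
`u i – a i – w i – c i – v i` of the incidence graph with no edges between them. Delete all other
vertices and suppress the inner vertices of each path: local complementation at a vertex of degree
two followed by its deletion joins its two neighbours. Lines are paired by the same argument in
the dual plane.
-/

open Function Relation SimpleGraph

section VertexMinor

theorem IsVertexMinor.refl (G : SimpleGraph V) (S : Set V) : IsVertexMinor G S G S :=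
  ReflTransGen.refl

theorem IsVertexMinor.trans {G H J : SimpleGraph V} {S T U : Set V}
    (hHG : IsVertexMinor H T G S) (hJH : IsVertexMinor J U H T) : IsVertexMinor J U G S :=
  ReflTransGen.trans hHG hJH

theorem localComp_eq_sup_edge {G : SimpleGraph V} {x a b : V}
    (hx : ∀ y, G.Adj x y ↔ y = a ∨ y = b) (hab : ¬G.Adj a b) :
    localComp G x = G ⊔ edge a b := by
  ext y z
  simp only [localComp, hx, sup_adj, edge_adj]
  have hba : ¬G.Adj b a := fun h => hab h.symm
  constructor
  · rintro ⟨hyz, h | ⟨⟨hy, hz⟩, -⟩⟩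
    · exact Or.inl h.1
    · refine Or.inr ⟨?_, hyz⟩
      rcases hy with rfl | rfl <;> rcases hz with rfl | rfl <;> tauto
  · rintro (h | ⟨hyz, hne⟩)
    · refine ⟨h.ne, Or.inl ⟨h, ?_⟩⟩
      rintro ⟨rfl | rfl, rfl | rfl⟩ <;> first | exact h.ne rfl | tauto
    · refine ⟨hne, Or.inr ⟨by tauto, ?_⟩⟩
      rcases hyz with ⟨rfl, rfl⟩ | ⟨rfl, rfl⟩ <;> assumption

theorem isVertexMinor_deleteVert_sup_edge {G : SimpleGraph V} {S : Set V} {x a b : V}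
    (hxS : x ∈ S) (hx : ∀ y, G.Adj x y ↔ y = a ∨ y = b) (hab : ¬G.Adj a b) :
    IsVertexMinor (deleteVert (G ⊔ edge a b) x) (S \ {x}) G S := by
  rw [← localComp_eq_sup_edge hx hab]
  exact (ReflTransGen.single (VMStep.lc G S x hxS)).tail (VMStep.del _ S x hxS)

def deleteVerts (G : SimpleGraph V) (D : Set V) : SimpleGraph V where
  Adj x y := G.Adj x y ∧ x ∉ D ∧ y ∉ D
  symm := ⟨fun _ _ ⟨h, hx, hy⟩ => ⟨h.symm, hy, hx⟩⟩
  loopless := ⟨fun _ h => G.loopless.irrefl _ h.1⟩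

theorem isVertexMinor_deleteVerts (G : SimpleGraph V) {S D : Set V} (hD : D.Finite)
    (hDS : D ⊆ S) : IsVertexMinor (deleteVerts G D) (S \ D) G S := by
  induction D, hD using Set.Finite.induction_on generalizing G S with
  | empty =>
    convert IsVertexMinor.refl G S using 1
    · ext; simp [deleteVerts]
    · simp
  | @insert a D ha _ ih =>
    have hdel : IsVertexMinor (deleteVert G a) (S \ {a}) G S :=
      ReflTransGen.single (VMStep.del G S a (hDS (Set.mem_insert a D)))
    have hrest := ih (deleteVert G a) (S := S \ {a}) fun x hx =>
      ⟨hDS (Set.mem_insert_of_mem a hx), fun h => ha (by rwa [← Set.mem_singleton_iff.1 h])⟩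
    convert hdel.trans hrest using 1
    · ext x y; simp only [deleteVerts, deleteVert, Set.mem_insert_iff]; tauto
    · rw [Set.sdiff_sdiff, Set.singleton_union]

theorem VMStep.support_subset {G G' : SimpleGraph V} {S S' : Set V} (h : VMStep (G, S) (G', S'))
    (hG : G.support ⊆ S) : G'.support ⊆ S' ∧ S' ⊆ S := by
  rcases h with ⟨_, _, v, hv⟩ | ⟨_, _, v, hv⟩
  · refine ⟨fun x ⟨y, hxy⟩ => ?_, le_rfl⟩
    rcases hxy.2 with ⟨h, -⟩ | ⟨⟨h, -⟩, -⟩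
    · exact hG ⟨y, h⟩
    · exact hG ⟨v, h.symm⟩
  · exact ⟨fun x ⟨y, h, hx, _⟩ => ⟨hG ⟨y, h⟩, hx⟩, Set.sdiff_subset⟩

theorem IsVertexMinor.support_subset {G H : SimpleGraph V} {S K : Set V}
    (h : IsVertexMinor H K G S) (hG : G.support ⊆ S) : H.support ⊆ K ∧ K ⊆ S := by
  suffices ∀ b, ReflTransGen VMStep (G, S) b → b.1.support ⊆ b.2 ∧ b.2 ⊆ S from this _ h
  intro b hb
  induction hb with
  | refl => exact ⟨hG, le_rfl⟩
  | tail _ hstep ih =>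
    have := VMStep.support_subset hstep ih.1
    exact ⟨this.1, this.2.trans ih.2⟩

theorem localComp_sup {G H : SimpleGraph V} (hGH : Disjoint G.support H.support) {v : V}
    (hv : v ∉ H.support) : localComp (G ⊔ H) v = localComp G v ⊔ H := by
  have hvH : ∀ y, ¬H.Adj v y := fun y h => hv ⟨y, h⟩
  ext x y
  simp only [localComp, sup_adj, hvH, or_false]
  by_cases hxy : H.Adj x y
  · have hx : x ∉ G.support := Set.disjoint_right.1 hGH ⟨y, hxy⟩
    have hvx : ¬G.Adj v x := fun h => hx ⟨v, h.symm⟩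
    simp only [hxy, hvx, false_and, or_true, iff_true]
    exact ⟨hxy.ne, Or.inl ⟨trivial, id⟩⟩
  · simp [hxy]

theorem deleteVert_sup {G H : SimpleGraph V} {v : V} (hv : v ∉ H.support) :
    deleteVert (G ⊔ H) v = deleteVert G v ⊔ H := by
  ext x y
  simp only [deleteVert, sup_adj]
  constructor
  · rintro ⟨h | h, hx, hy⟩
    · exact Or.inl ⟨h, hx, hy⟩
    · exact Or.inr h
  · rintro (⟨h, hx, hy⟩ | h)
    · exact ⟨Or.inl h, hx, hy⟩
    · exact ⟨Or.inr h, fun hxv => hv ⟨y, hxv ▸ h⟩, fun hyv => hv ⟨x, hyv ▸ h.symm⟩⟩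

theorem VMStep.sup_right {G G' H : SimpleGraph V} {S S' T : Set V} (h : VMStep (G, S) (G', S'))
    (hG : G.support ⊆ S) (hH : H.support ⊆ T) (hST : Disjoint S T) :
    VMStep (G ⊔ H, S ∪ T) (G' ⊔ H, S' ∪ T) := by
  have hGH : Disjoint G.support H.support := (hST.mono_left hG).mono_right hH
  rcases h with ⟨_, _, v, hv⟩ | ⟨_, _, v, hv⟩
  · have hvH : v ∉ H.support := fun h => Set.disjoint_left.1 hST hv (hH h)
    rw [← localComp_sup hGH hvH]
    exact VMStep.lc _ (S ∪ T) v (Or.inl hv)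
  · have hvT : v ∉ T := Set.disjoint_left.1 hST hv
    have hset : S \ {v} ∪ T = (S ∪ T) \ {v} := by
      rw [Set.union_sdiff_distrib, Set.sdiff_singleton_eq_self hvT]
    rw [← deleteVert_sup fun h => hvT (hH h), hset]
    exact VMStep.del _ (S ∪ T) v (Or.inl hv)

theorem IsVertexMinor.sup_right {G G' H : SimpleGraph V} {S S' T : Set V}
    (h : IsVertexMinor G' S' G S) (hG : G.support ⊆ S) (hH : H.support ⊆ T)
    (hST : Disjoint S T) : IsVertexMinor (G' ⊔ H) (S' ∪ T) (G ⊔ H) (S ∪ T) := by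
  suffices ∀ b, ReflTransGen VMStep (G, S) b →
      ReflTransGen VMStep (G ⊔ H, S ∪ T) (b.1 ⊔ H, b.2 ∪ T) from this _ h
  intro b hb
  induction hb with
  | refl => exact ReflTransGen.refl
  | tail hab hstep ih =>
    have hinv := IsVertexMinor.support_subset hab hG
    exact ih.tail (hstep.sup_right hinv.1 hH (hST.mono_left hinv.2))

theorem IsVertexMinor.sup {G₁ G₂ H₁ H₂ : SimpleGraph V} {S₁ S₂ K₁ K₂ : Set V}
    (h₁ : IsVertexMinor H₁ K₁ G₁ S₁) (h₂ : IsVertexMinor H₂ K₂ G₂ S₂)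
    (hG₁ : G₁.support ⊆ S₁) (hG₂ : G₂.support ⊆ S₂) (hS : Disjoint S₁ S₂) :
    IsVertexMinor (H₁ ⊔ H₂) (K₁ ∪ K₂) (G₁ ⊔ G₂) (S₁ ∪ S₂) := by
  have hH₁ := h₁.support_subset hG₁
  have h₂' := h₂.sup_right hG₂ hH₁.1 (hS.mono_left hH₁.2).symm
  rw [sup_comm G₂, sup_comm H₂, Set.union_comm S₂, Set.union_comm K₂] at h₂'
  exact (h₁.sup_right hG₁ hG₂ hS).trans h₂'

theorem IsVertexMinor.biSup {ι : Type*} {s : Finset ι} {G H : ι → SimpleGraph V}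
    {S K : ι → Set V} (h : ∀ i ∈ s, IsVertexMinor (H i) (K i) (G i) (S i))
    (hG : ∀ i ∈ s, (G i).support ⊆ S i) (hS : (s : Set ι).PairwiseDisjoint S) :
    IsVertexMinor (⨆ i ∈ s, H i) (⋃ i ∈ s, K i) (⨆ i ∈ s, G i) (⋃ i ∈ s, S i) := by
  classical
  induction s using Finset.induction_on with
  | empty => simpa using IsVertexMinor.refl ⊥ ∅
  | @insert j s hj ih =>
    simp only [Finset.iSup_insert, Finset.set_biUnion_insert]
    simp only [Finset.mem_insert, forall_eq_or_imp, Finset.coe_insert] at h hG hS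
    refine (h.1).sup (ih h.2 hG.2 (hS.subset (Set.subset_insert _ _))) hG.1 ?_ ?_
    · intro x ⟨y, hxy⟩
      obtain ⟨i, hi, hxy⟩ : ∃ i ∈ s, (G i).Adj x y := by simpa using hxy
      exact Set.mem_biUnion hi (hG.2 i hi ⟨y, hxy⟩)
    · refine Set.disjoint_iUnion₂_right.2 fun i hi => hS (Set.mem_insert _ _)
        (Set.mem_insert_of_mem _ hi) ?_
      rintro rfl
      exact hj hi

theorem IsVertexMinor.iSup {ι : Type*} [Fintype ι] {G H : ι → SimpleGraph V} {S K : ι → Set V}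
    (h : ∀ i, IsVertexMinor (H i) (K i) (G i) (S i)) (hG : ∀ i, (G i).support ⊆ S i)
    (hS : Pairwise (Disjoint on S)) :
    IsVertexMinor (⨆ i, H i) (⋃ i, K i) (⨆ i, G i) (⋃ i, S i) := by
  simpa using IsVertexMinor.biSup (s := Finset.univ) (fun i _ => h i) (fun i _ => hG i)
    fun i _ j _ hij => hS hij

end VertexMinor

section Paths

def pathOn : List V → SimpleGraph V
  | a :: b :: l => edge a b ⊔ pathOn (b :: l)
  | _ => ⊥

theorem pathOn_support_subset : ∀ l : List V, (pathOn l).support ⊆ {x | x ∈ l}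
  | [] | [_] => fun _ ⟨_, h⟩ => h.elim
  | a :: b :: l => by
    rintro x ⟨y, h | h⟩
    · rcases (edge_adj a b x y).1 h with ⟨⟨rfl, rfl⟩ | ⟨rfl, rfl⟩, -⟩ <;> simp
    · exact List.mem_cons_of_mem a (pathOn_support_subset (b :: l) ⟨y, h⟩)

theorem pathOn_cons_cons_cons_adj_iff {a x b : V} {l : List V} (hl : (a :: x :: b :: l).Nodup)
    (y : V) : (pathOn (a :: x :: b :: l)).Adj x y ↔ y = a ∨ y = b := by
  simp only [List.nodup_cons, List.mem_cons, not_or] at hl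
  obtain ⟨⟨hax, -, -⟩, ⟨hxb, hxl⟩, -⟩ := hl
  simp only [pathOn, sup_adj, edge_adj]
  constructor
  · rintro (⟨⟨h, rfl⟩ | ⟨-, rfl⟩, -⟩ | ⟨⟨-, rfl⟩ | ⟨h, rfl⟩, -⟩ | h)
    · exact absurd h.symm hax
    · exact Or.inl rfl
    · exact Or.inr rfl
    · exact absurd h hxb
    · have := pathOn_support_subset (b :: l) ⟨y, h⟩
      simp only [Set.mem_ofPred_eq, List.mem_cons] at this
      tauto
  · rintro (rfl | rfl)
    · exact Or.inl ⟨Or.inr ⟨trivial, rfl⟩, Ne.symm hax⟩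
    · exact Or.inr (Or.inl ⟨Or.inl ⟨trivial, rfl⟩, hxb⟩)

theorem not_pathOn_cons_cons_cons_adj {a x b : V} {l : List V} (hl : (a :: x :: b :: l).Nodup) :
    ¬(pathOn (a :: x :: b :: l)).Adj a b := by
  simp only [List.nodup_cons, List.mem_cons, not_or] at hl
  obtain ⟨⟨hax, hab, hal⟩, ⟨hxb, -⟩, -⟩ := hl
  simp only [pathOn, sup_adj, edge_adj]
  rintro (⟨⟨-, rfl⟩ | ⟨rfl, -⟩, -⟩ | ⟨⟨rfl, -⟩ | ⟨rfl, -⟩, -⟩ | h)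
  · exact hxb rfl
  · exact hax rfl
  · exact hax rfl
  · exact hab rfl
  · have := pathOn_support_subset (b :: l) ⟨b, h⟩
    simp only [Set.mem_ofPred_eq, List.mem_cons] at this
    tauto

theorem deleteVert_pathOn_sup_edge {a x b : V} {l : List V} (hl : (a :: x :: b :: l).Nodup) :
    deleteVert (pathOn (a :: x :: b :: l) ⊔ edge a b) x = pathOn (a :: b :: l) := by
  simp only [List.nodup_cons, List.mem_cons, not_or] at hl
  obtain ⟨⟨hax, hab, -⟩, ⟨hxb, hxl⟩, -⟩ := hl
  have hsupp : ∀ y z, (pathOn (b :: l)).Adj y z → y ≠ x := fun y z h => by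
    have := pathOn_support_subset (b :: l) ⟨z, h⟩
    rintro rfl
    simp only [Set.mem_ofPred_eq, List.mem_cons] at this
    tauto
  ext y z
  simp only [pathOn, deleteVert, sup_adj]
  constructor
  · rintro ⟨(h | h | h) | h, hy, hz⟩
    · obtain ⟨⟨rfl, rfl⟩ | ⟨rfl, rfl⟩, -⟩ := (edge_adj _ _ _ _).1 h <;> tauto
    · obtain ⟨⟨rfl, rfl⟩ | ⟨rfl, rfl⟩, -⟩ := (edge_adj _ _ _ _).1 h <;> tauto
    · exact Or.inr h
    · exact Or.inl h
  · rintro (h | h)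
    · obtain ⟨⟨rfl, rfl⟩ | ⟨rfl, rfl⟩, -⟩ := (edge_adj _ _ _ _).1 h <;>
        exact ⟨Or.inr h, by tauto, by tauto⟩
    · exact ⟨Or.inl (Or.inr (Or.inr h)), hsupp _ _ h, hsupp _ _ h.symm⟩

theorem isVertexMinor_pathOn_cons_cons_cons {a x b : V} {l : List V}
    (hl : (a :: x :: b :: l).Nodup) :
    IsVertexMinor (pathOn (a :: b :: l)) {y | y ∈ a :: b :: l}
      (pathOn (a :: x :: b :: l)) {y | y ∈ a :: x :: b :: l} := by
  have hS : {y | y ∈ a :: x :: b :: l} \ {x} = {y | y ∈ a :: b :: l} := by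
    have hl' := hl
    simp only [List.nodup_cons, List.mem_cons, not_or] at hl'
    ext y
    simp only [Set.mem_ofPred_eq, List.mem_cons, Set.mem_sdiff, Set.mem_singleton_iff]
    constructor
    · tauto
    · rintro (rfl | rfl | h) <;> [tauto; tauto; exact ⟨by tauto, fun h' => hl'.2.1.2 (h' ▸ h)⟩]
  rw [← hS, ← deleteVert_pathOn_sup_edge hl]
  exact isVertexMinor_deleteVert_sup_edge (by simp) (pathOn_cons_cons_cons_adj_iff hl)
    (not_pathOn_cons_cons_cons_adj hl)

theorem isVertexMinor_edge_pathOn (a b : V) :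
    ∀ l : List V, (a :: l ++ [b]).Nodup →
      IsVertexMinor (edge a b) {a, b} (pathOn (a :: l ++ [b])) {y | y ∈ a :: l ++ [b]}
  | [], _ => by
    convert IsVertexMinor.refl (edge a b) {a, b} using 1
    · exact sup_bot_eq _
    · ext; simp
  | x :: l, hl => by
    obtain ⟨c, l', hc⟩ : ∃ c l', l ++ [b] = c :: l' := List.exists_cons_of_ne_nil (by simp)
    have hl' : (a :: l ++ [b]).Nodup := hl.sublist (.cons_cons a (.cons x (.refl _)))
    have step := isVertexMinor_pathOn_cons_cons_cons (x := x) (by simpa [hc] using hl)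
    simp only [List.cons_append, hc] at step ⊢
    exact step.trans (by simpa [hc] using isVertexMinor_edge_pathOn a b l hl')

theorem pathOn_ofFn : ∀ {n : ℕ} (f : Fin n → V), pathOn (List.ofFn f) = (pathGraph n).map f
  | 0, f => by ext x y; simp [pathOn, map_adj']
  | 1, f => by
    ext x y
    simp only [List.ofFn_succ, List.ofFn_zero, pathOn, bot_adj, map_adj', false_iff]
    rintro ⟨-, r, s, h, -⟩
    exact h.ne (Subsingleton.elim r s)
  | n + 2, f => by
    have h : pathOn (List.ofFn f) = edge (f 0) (f 1) ⊔ pathOn (List.ofFn fun i => f i.succ) := by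
      rw [List.ofFn_succ, List.ofFn_succ (f := fun i => f i.succ)]
      rfl
    rw [h, pathOn_ofFn]
    ext x y
    simp only [sup_adj, edge_adj, map_adj', pathGraph_adj]
    constructor
    · rintro (⟨⟨rfl, rfl⟩ | ⟨rfl, rfl⟩, hne⟩ | ⟨hne, r, s, hrs, rfl, rfl⟩)
      · exact ⟨hne, 0, 1, by simp, rfl, rfl⟩
      · exact ⟨hne, 1, 0, by simp, rfl, rfl⟩
      · exact ⟨hne, r.succ, s.succ, by simpa using hrs, rfl, rfl⟩
    · rintro ⟨hne, r, s, hrs, rfl, rfl⟩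
      rcases Fin.eq_zero_or_eq_succ r with rfl | ⟨r, rfl⟩ <;>
        rcases Fin.eq_zero_or_eq_succ s with rfl | ⟨s, rfl⟩
      · simp at hrs
      · obtain rfl : s = 0 := Fin.ext (by simpa using hrs)
        exact Or.inl ⟨Or.inl ⟨rfl, rfl⟩, hne⟩
      · obtain rfl : r = 0 := Fin.ext (by simpa using hrs)
        exact Or.inl ⟨Or.inr ⟨rfl, rfl⟩, hne⟩
      · exact Or.inr ⟨hne, r, s, by simpa using hrs, rfl, rfl⟩

theorem List.exists_ofFn_eq_cons_append {α : Type*} {n : ℕ} (f : Fin (n + 2) → α) :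
    ∃ m, List.ofFn f = f 0 :: m ++ [f (Fin.last _)] :=
  ⟨_, by rw [List.ofFn_succ', List.ofFn_succ, List.concat_eq_append]; rfl⟩

end Paths

section InducedPaths

variable {k n : ℕ}

theorem deleteVerts_eq_iSup_pathOn (G : SimpleGraph V) (f : Fin k → Fin n → V)
    (hadj : ∀ i j r s, G.Adj (f i r) (f j s) ↔ i = j ∧ (pathGraph n).Adj r s) :
    deleteVerts G (Set.range (uncurry f))ᶜ = ⨆ i, pathOn (List.ofFn (f i)) := by
  ext x y
  simp only [deleteVerts, Set.mem_compl_iff, not_not, iSup_adj, pathOn_ofFn, map_adj',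
    Set.mem_range, Prod.exists, uncurry_apply_pair]
  constructor
  · rintro ⟨hxy, ⟨i, r, rfl⟩, ⟨j, s, rfl⟩⟩
    obtain ⟨rfl, hrs⟩ := (hadj i j r s).1 hxy
    exact ⟨i, hxy.ne, r, s, hrs, rfl, rfl⟩
  · rintro ⟨i, -, r, s, hrs, rfl, rfl⟩
    exact ⟨(hadj i i r s).2 ⟨rfl, hrs⟩, ⟨i, r, rfl⟩, ⟨i, s, rfl⟩⟩

theorem isVertexMinor_pairingGraph_iSup_pathOn (f : Fin k → Fin (n + 2) → V)
    (hf : Injective (uncurry f)) :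
    IsVertexMinor (pairingGraph (f · 0) (f · (Fin.last _)))
      (Set.range (f · 0) ∪ Set.range (f · (Fin.last _)))
      (⨆ i, pathOn (List.ofFn (f i))) (Set.range (uncurry f)) := by
  have hrange : ∀ i, {x | x ∈ List.ofFn (f i)} = Set.range (f i) := fun i =>
    Set.ext fun _ => List.mem_ofFn
  have hpaths := IsVertexMinor.iSup (S := fun i => {x | x ∈ List.ofFn (f i)})
    (H := fun i => edge (f i 0) (f i (Fin.last _))) (K := fun i => {f i 0, f i (Fin.last _)})
    (fun i => by
      obtain ⟨m, hm⟩ := List.exists_ofFn_eq_cons_append (f i)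
      rw [hm]
      exact isVertexMinor_edge_pathOn _ _ m
        (hm ▸ List.nodup_ofFn.2 (hf.comp (Prod.mk_right_injective i))))
    (fun i => pathOn_support_subset _)
    (fun i j hij => by
      simp only [onFun, hrange]
      refine Set.disjoint_left.2 ?_
      rintro _ ⟨r, rfl⟩ ⟨s, hs⟩
      exact hij (congrArg Prod.fst (hf (a₁ := (j, s)) (a₂ := (i, r)) hs)).symm)
  convert hpaths using 1
  · ext x y
    simp only [pairingGraph, iSup_adj, edge_adj]
    aesop
  · ext x
    simp only [Set.mem_union, Set.mem_range, Set.mem_iUnion, Set.mem_insert_iff,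
      Set.mem_singleton_iff]
    aesop
  · simp only [hrange]
    ext x
    simp

theorem isVertexMinor_pairingGraph_of_paths [Finite V] (G : SimpleGraph V)
    (f : Fin k → Fin (n + 2) → V) (hf : Injective (uncurry f))
    (hadj : ∀ i j r s, G.Adj (f i r) (f j s) ↔ i = j ∧ (pathGraph (n + 2)).Adj r s) :
    IsVertexMinor (pairingGraph (f · 0) (f · (Fin.last _)))
      (Set.range (f · 0) ∪ Set.range (f · (Fin.last _))) G Set.univ := by
  have hdel := isVertexMinor_deleteVerts G (Set.toFinite (Set.range (uncurry f))ᶜ)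
    (Set.subset_univ _)
  rw [deleteVerts_eq_iSup_pathOn G f hadj, Set.sdiff_compl, Set.univ_inter] at hdel
  exact hdel.trans (isVertexMinor_pairingGraph_iSup_pathOn f hf)

end InducedPaths

open Finset

theorem exists_injective_forall_mem_of_card_le {ι α : Type*} [Fintype ι] (t : ι → Finset α)
    (ht : ∀ i, Fintype.card ι ≤ #(t i)) : ∃ f : ι → α, Injective f ∧ ∀ i, f i ∈ t i := by
  classical
  refine (all_card_le_biUnion_card_iff_exists_injective t).1 fun s => ?_
  rcases s.eq_empty_or_nonempty with rfl | ⟨i, hi⟩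
  · simp
  · exact (card_le_univ s).trans ((ht i).trans (card_le_card (subset_biUnion_of_mem t hi)))

namespace Configuration

variable {P L ι : Type*} [Membership P L]

variable (L) in
def Collinear (p q r : P) : Prop := ∃ l : L, p ∈ l ∧ q ∈ l ∧ r ∈ l

theorem Collinear.swap {p q r : P} : Collinear L p q r → Collinear L q p r
  | ⟨l, hp, hq, hr⟩ => ⟨l, hq, hp, hr⟩

theorem subsingleton_collinear_of_not_mem [Nondegenerate P L] {M : L} {u p : P} (hu : u ∉ M)
    (hp : p ≠ u) : {w | w ∈ M ∧ Collinear L u p w}.Subsingleton := by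
  rintro w₁ ⟨hw₁, l₁, hu₁, hp₁, hl₁⟩ w₂ ⟨hw₂, l₂, hu₂, hp₂, hl₂⟩
  obtain rfl : l₁ = l₂ := (Nondegenerate.eq_or_eq hu₁ hp₁ hu₂ hp₂).resolve_left hp.symm
  exact (Nondegenerate.eq_or_eq hl₁ hl₂ hw₁ hw₂).resolve_right fun h => hu (h ▸ hu₁)

theorem exists_finset_forall_not_collinear [Nondegenerate P L] [Finite P] {C : Finset P} {M : L}
    (hCM : ∀ p ∈ C, p ∉ M) {u v : P} (hu : u ∈ C) (hv : v ∈ C) (huv : u ≠ v) :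
    ∃ B : Finset P, #B + 3 ≤ 2 * #C ∧ ∀ w ∈ M, w ∉ B →
      ∀ p ∈ C, (p ≠ u → ¬Collinear L u p w) ∧ (p ≠ v → ¬Collinear L v p w) := by
  classical
  have := Fintype.ofFinite P
  let bad (x p : P) : Finset P := {w | w ∈ M ∧ Collinear L x p w}
  have hbad : ∀ x ∈ C, ∀ s : Finset P, x ∉ s → #(s.biUnion (bad x)) ≤ #s := fun x hx s hxs =>
    card_biUnion_le_card_mul _ _ 1 (fun p hp => card_le_one.2 fun w₁ h₁ w₂ h₂ =>
      subsingleton_collinear_of_not_mem (hCM x hx) (ne_of_mem_of_not_mem hp hxs)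
        (mem_filter.1 h₁).2 (mem_filter.1 h₂).2) |>.trans_eq (mul_one _)
  have hC : 2 ≤ #C := card_pair huv ▸ card_le_card (by simp [insert_subset_iff, hu, hv])
  refine ⟨(C.erase u).biUnion (bad u) ∪ ((C.erase u).erase v).biUnion (bad v), ?_, ?_⟩
  · have h₁ := hbad u hu (C.erase u) (notMem_erase u C)
    have h₂ := hbad v hv ((C.erase u).erase v) (notMem_erase v _)
    have := card_union_le ((C.erase u).biUnion (bad u)) (((C.erase u).erase v).biUnion (bad v))
    rw [card_erase_of_mem (mem_erase.2 ⟨huv.symm, hv⟩), card_erase_of_mem hu] at *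
    omega
  intro w hwM hwB p hp
  have hmem : ∀ x q, Collinear L x q w → w ∈ bad x q := fun x q h =>
    mem_filter.2 ⟨mem_univ _, hwM, h⟩
  refine ⟨fun hpu hcol => hwB (mem_union_left _ (mem_biUnion.2 ⟨p, mem_erase.2 ⟨hpu, hp⟩,
    hmem _ _ hcol⟩)), fun hpv hcol => ?_⟩
  by_cases hpu : p = u
  · -- the line through `v` and `u` was already counted from `u`
    subst hpu
    exact hwB (mem_union_left _ (mem_biUnion.2 ⟨v, mem_erase.2 ⟨huv.symm, hv⟩, hmem _ _ hcol.swap⟩))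
  · exact hwB (mem_union_right _ (mem_biUnion.2 ⟨p, mem_erase.2 ⟨hpv, mem_erase.2 ⟨hpu, hp⟩⟩,
      hmem _ _ hcol⟩))

structure IsInducedZigzag (u : ι → P) (a : ι → L) (w : ι → P) (c : ι → L) (v : ι → P) : Prop where
  injective_w : Injective w
  w_ne_u : ∀ i j, w i ≠ u j
  w_ne_v : ∀ i j, w i ≠ v j
  u_mem_a : ∀ i j, u i ∈ a j ↔ i = j
  w_mem_a : ∀ i j, w i ∈ a j ↔ i = j
  v_not_mem_a : ∀ i j, v i ∉ a j
  u_not_mem_c : ∀ i j, u i ∉ c j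
  w_mem_c : ∀ i j, w i ∈ c j ↔ i = j
  v_mem_c : ∀ i j, v i ∈ c j ↔ i = j

theorem IsInducedZigzag.of_detour [Nondegenerate P L] {u w v : ι → P} {a c : ι → L} {M : L}
    (huv : Injective (Sum.elim u v)) (hw : Injective w) (hwM : ∀ i, w i ∈ M)
    (hM : ∀ x, Sum.elim u v x ∉ M)
    (hgood : ∀ i x, (Sum.elim u v x ≠ u i → ¬Collinear L (u i) (Sum.elim u v x) (w i)) ∧
      (Sum.elim u v x ≠ v i → ¬Collinear L (v i) (Sum.elim u v x) (w i)))
    (hua : ∀ i, u i ∈ a i) (hwa : ∀ i, w i ∈ a i) (hwc : ∀ i, w i ∈ c i) (hvc : ∀ i, v i ∈ c i) :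
    IsInducedZigzag u a w c v := by
  have hu : Injective u := huv.comp Sum.inl_injective
  have hv : Injective v := huv.comp Sum.inr_injective
  have huv' : ∀ i j, u i ≠ v j := fun i j h => Sum.inl_ne_inr (huv h)
  have hwl : ∀ i j (l : L), w i ∈ l → w j ∈ l → (u j ∈ l ∨ v j ∈ l) → i = j :=
    fun i j l hi hj hl => hw <| (Nondegenerate.eq_or_eq hi hj (hwM i) (hwM j)).resolve_right <| by
      rintro rfl
      exact hl.elim (hM (.inl j)) (hM (.inr j))
  exact
  { injective_w := hw
    w_ne_u i j h := hM (.inl j) (h ▸ hwM i : u j ∈ M)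
    w_ne_v i j h := hM (.inr j) (h ▸ hwM i : v j ∈ M)
    u_mem_a i j := ⟨fun h => by_contra fun hij =>
      (hgood j (.inl i)).1 (hu.ne hij) ⟨a j, hua j, h, hwa j⟩, by rintro rfl; exact hua i⟩
    w_mem_a i j := ⟨fun h => hwl i j _ h (hwa j) (.inl (hua j)), by rintro rfl; exact hwa i⟩
    v_not_mem_a i j h := (hgood j (.inr i)).1 (huv' j i).symm ⟨a j, hua j, h, hwa j⟩
    u_not_mem_c i j h := (hgood j (.inl i)).2 (huv' i j) ⟨c j, hvc j, h, hwc j⟩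
    w_mem_c i j := ⟨fun h => hwl i j _ h (hwc j) (.inr (hvc j)), by rintro rfl; exact hwc i⟩
    v_mem_c i j := ⟨fun h => by_contra fun hij =>
      (hgood j (.inr i)).2 (hv.ne hij) ⟨c j, hvc j, h, hwc j⟩, by rintro rfl; exact hvc i⟩ }

structure IsIncidenceEmbedding (G : SimpleGraph V) (pt : P → V) (ln : L → V) : Prop where
  injective : Injective (Sum.elim pt ln)
  adj_pt_ln : ∀ p l, G.Adj (pt p) (ln l) ↔ p ∈ l
  not_adj_pt_pt : ∀ p q, ¬G.Adj (pt p) (pt q)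
  not_adj_ln_ln : ∀ l m, ¬G.Adj (ln l) (ln m)

namespace IsIncidenceEmbedding

variable {G : SimpleGraph V} {pt : P → V} {ln : L → V}

theorem adj_ln_pt (hG : IsIncidenceEmbedding G pt ln) (l : L) (p : P) :
    G.Adj (ln l) (pt p) ↔ p ∈ l :=
  G.adj_comm _ _ |>.trans (hG.adj_pt_ln p l)

theorem dual (hG : IsIncidenceEmbedding G pt ln) :
    IsIncidenceEmbedding (P := Dual L) (L := Dual P) G ln pt where
  injective := Sum.elim_swap ▸ hG.injective.comp Sum.swap_leftInverse.injective
  adj_pt_ln l p := hG.adj_ln_pt l p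
  not_adj_pt_pt l m := hG.not_adj_ln_ln l m
  not_adj_ln_ln p q := hG.not_adj_pt_pt p q

end IsIncidenceEmbedding

def zigzagVerts (pt : P → V) (ln : L → V) (u : ι → P) (a : ι → L) (w : ι → P) (c : ι → L)
    (v : ι → P) (i : ι) : Fin 5 → V :=
  ![pt (u i), ln (a i), pt (w i), ln (c i), pt (v i)]

namespace IsInducedZigzag

variable {G : SimpleGraph V} {pt : P → V} {ln : L → V} {u w v : ι → P} {a c : ι → L}

theorem adj_zigzagVerts (hG : IsIncidenceEmbedding G pt ln) (hz : IsInducedZigzag u a w c v)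
    (i j : ι) (r s : Fin 5) :
    G.Adj (zigzagVerts pt ln u a w c v i r) (zigzagVerts pt ln u a w c v j s) ↔
      i = j ∧ (pathGraph 5).Adj r s := by
  fin_cases r <;> fin_cases s <;>
    simp [zigzagVerts, hG.adj_pt_ln, hG.adj_ln_pt, hG.not_adj_pt_pt, hG.not_adj_ln_ln, hz.u_mem_a,
      hz.w_mem_a, hz.v_not_mem_a, hz.u_not_mem_c, hz.w_mem_c, hz.v_mem_c, pathGraph_adj, eq_comm]

theorem injective_zigzagVerts (hG : IsIncidenceEmbedding G pt ln)
    (huv : Injective (Sum.elim u v)) (hz : IsInducedZigzag u a w c v) :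
    Injective (uncurry (zigzagVerts pt ln u a w c v)) := by
  have hpt : Injective pt := hG.injective.comp Sum.inl_injective
  have hln : Injective ln := hG.injective.comp Sum.inr_injective
  have hptln : ∀ p l, pt p ≠ ln l := fun p l h => Sum.inl_ne_inr (hG.injective h)
  have hu : Injective u := huv.comp Sum.inl_injective
  have hv : Injective v := huv.comp Sum.inr_injective
  have huv' : ∀ i j, u i ≠ v j := fun i j h => Sum.inl_ne_inr (huv h)
  have ha : Injective a := fun i j h => (hz.u_mem_a i j).1 (h ▸ (hz.u_mem_a i i).2 rfl)
  have hc : Injective c := fun i j h => (hz.v_mem_c i j).1 (h ▸ (hz.v_mem_c i i).2 rfl)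
  have hac : ∀ i j, a i ≠ c j := fun i j h => hz.u_not_mem_c i j (h ▸ (hz.u_mem_a i i).2 rfl)
  rintro ⟨i, r⟩ ⟨j, s⟩ h
  fin_cases r <;> fin_cases s <;>
    simp [zigzagVerts, hpt.eq_iff, hln.eq_iff, hptln, (hptln _ _).symm, hu.eq_iff, hv.eq_iff,
      hz.injective_w.eq_iff, ha.eq_iff, hc.eq_iff, huv', (huv' _ _).symm, hz.w_ne_u, hz.w_ne_v,
      (hz.w_ne_u _ _).symm, (hz.w_ne_v _ _).symm, hac, (hac _ _).symm] at h ⊢ <;> exact h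

end IsInducedZigzag

section ProjectivePlane

open ProjectivePlane

variable [ProjectivePlane P L] [Finite P] [Finite L]

theorem exists_line_forall_not_mem (C : Finset P) (hC : #C ≤ order P L) :
    ∃ M : L, ∀ p ∈ C, p ∉ M := by
  classical
  have := Fintype.ofFinite L
  have hlines : ∀ p : P, #{l : L | p ∈ l} = order P L + 1 := fun p => by
    rw [← lineCount_eq L p, lineCount, Nat.card_eq_fintype_card, Fintype.card_subtype]
  have hcard : #(C.biUnion fun p => {l : L | p ∈ l}) < #(univ : Finset L) := calc
    _ ≤ ∑ p ∈ C, #{l : L | p ∈ l} := card_biUnion_le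
    _ = #C * (order P L + 1) := by simp [hlines]
    _ ≤ order P L * (order P L + 1) := by gcongr
    _ < order P L ^ 2 + order P L + 1 := by nlinarith
    _ = #univ := (card_lines P L).symm
  obtain ⟨M, -, hM⟩ := exists_mem_notMem_of_card_lt_card hcard
  exact ⟨M, fun p hp hpM => hM (mem_biUnion.2 ⟨p, hp, by simpa using hpM⟩)⟩

theorem exists_finset_detour {C : Finset P} {M : L} (hCM : ∀ p ∈ C, p ∉ M) {u v : P}
    (hu : u ∈ C) (hv : v ∈ C) (huv : u ≠ v) :
    ∃ t : Finset P, order P L + 4 ≤ #t + 2 * #C ∧ ∀ w ∈ t, w ∈ M ∧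
      ∀ p ∈ C, (p ≠ u → ¬Collinear L u p w) ∧ (p ≠ v → ¬Collinear L v p w) := by
  classical
  have := Fintype.ofFinite P
  obtain ⟨B, hB, hgood⟩ := exists_finset_forall_not_collinear hCM hu hv huv
  have hM : #({w | w ∈ M} : Finset P) = order P L + 1 := by
    rw [← pointCount_eq P M, pointCount, Nat.card_eq_fintype_card, Fintype.card_subtype]
  refine ⟨({w | w ∈ M} : Finset P) \ B, ?_, fun w hw => ?_⟩
  · have := le_card_sdiff B {w | w ∈ M}
    omega
  · obtain ⟨hwM, hwB⟩ := mem_sdiff.1 hw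
    rw [mem_filter_univ] at hwM
    exact ⟨hwM, hgood w hwM hwB⟩

theorem exists_isInducedZigzag [Fintype ι] (hk : 5 * Fintype.card ι ≤ order P L + 4)
    (u v : ι → P) (huv : Injective (Sum.elim u v)) :
    ∃ a w c, IsInducedZigzag (L := L) u a w c v := by
  classical
  set C := univ.image (Sum.elim u v)
  have hC : #C = 2 * Fintype.card ι := by
    rw [card_image_of_injective _ huv, card_univ, Fintype.card_sum]; ring
  have hq := one_lt_order P L
  obtain ⟨M, hM⟩ := exists_line_forall_not_mem (L := L) C (by omega)
  have hmem : ∀ x, Sum.elim u v x ∈ C := fun x => mem_image_of_mem _ (mem_univ x)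
  choose t ht hgood using fun i => exists_finset_detour hM (hmem (.inl i)) (hmem (.inr i))
    fun h => Sum.inl_ne_inr (huv h)
  obtain ⟨w, hw, hwt⟩ := exists_injective_forall_mem_of_card_le t fun i => by
    have := ht i; omega
  have hwM : ∀ i, w i ∈ M := fun i => (hgood i _ (hwt i)).1
  have hwu : ∀ i, u i ≠ w i := fun i h => hM _ (hmem (.inl i)) (h ▸ hwM i : u i ∈ M)
  have hwv : ∀ i, w i ≠ v i := fun i h => hM _ (hmem (.inr i)) (h.symm ▸ hwM i : v i ∈ M)
  exact ⟨fun i => HasLines.mkLine (hwu i), w, fun i => HasLines.mkLine (hwv i),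
    .of_detour huv hw hwM (fun x => hM _ (hmem x)) (fun i x => (hgood i _ (hwt i)).2 _ (hmem x))
      (fun i => (HasLines.mkLine_ax _).1) (fun i => (HasLines.mkLine_ax _).2)
      (fun i => (HasLines.mkLine_ax _).1) (fun i => (HasLines.mkLine_ax _).2)⟩

theorem IsIncidenceEmbedding.isVertexMinor_pairingGraph [Finite V] {G : SimpleGraph V}
    {pt : P → V} {ln : L → V} (hG : IsIncidenceEmbedding G pt ln) {k : ℕ}
    (hk : 5 * k ≤ order P L + 4) (u v : Fin k → P) (huv : Injective (Sum.elim u v)) :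
    IsVertexMinor (pairingGraph (pt ∘ u) (pt ∘ v)) (Set.range (pt ∘ u) ∪ Set.range (pt ∘ v)) G
      Set.univ := by
  obtain ⟨a, w, c, hz⟩ := exists_isInducedZigzag (by simpa using hk) u v huv
  exact isVertexMinor_pairingGraph_of_paths (n := 3) G _ (hz.injective_zigzagVerts hG huv)
    (hz.adj_zigzagVerts hG)

end ProjectivePlane

end Configuration

section ProjectivePlaneOverField

open Module Submodule Configuration
open scoped LinearAlgebra.Projectivization

variable {F}

instance : Membership (ProjPoint F) (ProjLine F) := ⟨fun l p => p.val ≤ l.val⟩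

namespace ProjPoint

theorem eq_of_le {p q : ProjPoint F} (h : p.val ≤ q.val) : p = q :=
  Subtype.ext (eq_of_le_of_finrank_le h (p.2.trans q.2.symm).ge)

def mk (x : Fin 3 → F) (hx : x ≠ 0) : ProjPoint F := ⟨span F {x}, finrank_span_singleton hx⟩

theorem finrank_sup {p q : ProjPoint F} (h : p ≠ q) : finrank F ↥(p.val ⊔ q.val) = 2 := by
  have hlt : p.val ⊓ q.val < p.val :=
    inf_le_left.lt_of_ne fun h' => h (eq_of_le (h' ▸ inf_le_right))
  have := finrank_lt_finrank_of_lt hlt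
  have := finrank_sup_add_finrank_inf_eq p.val q.val
  rw [p.2, q.2] at *
  omega

end ProjPoint

namespace ProjLine

theorem eq_of_le {l m : ProjLine F} (h : l.val ≤ m.val) : l = m :=
  Subtype.ext (eq_of_le_of_finrank_le h (l.2.trans m.2.symm).ge)

def ofNormal (a : Fin 3 → F) (ha : a ≠ 0) : ProjLine F :=
  ⟨LinearMap.ker (dotProductBilin F F a), by
    have hf : dotProductBilin F F a ≠ 0 := fun h => by
      obtain ⟨i, hi⟩ := Function.ne_iff.1 ha
      exact hi (by simpa using LinearMap.congr_fun h (Pi.single i 1))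
    have := Module.Dual.finrank_ker_add_one_of_ne_zero hf
    rw [finrank_fin_fun] at this
    omega⟩

theorem mem_ofNormal {x a : Fin 3 → F} (ha : a ≠ 0) : x ∈ (ofNormal a ha).val ↔ a ⬝ᵥ x = 0 :=
  LinearMap.mem_ker

theorem mk_mem_ofNormal {x a : Fin 3 → F} (hx : x ≠ 0) (ha : a ≠ 0) :
    ProjPoint.mk x hx ∈ ofNormal a ha ↔ a ⬝ᵥ x = 0 :=
  (span_singleton_le_iff_mem _ _).trans (mem_ofNormal ha)

theorem finrank_inf {l m : ProjLine F} (h : l ≠ m) : finrank F ↥(l.val ⊓ m.val) = 1 := by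
  have hlt : l.val < l.val ⊔ m.val :=
    le_sup_left.lt_of_ne fun h' => h (eq_of_le (h' ▸ le_sup_right)).symm
  have := finrank_lt_finrank_of_lt hlt
  have := (l.val ⊔ m.val).finrank_le
  have := finrank_sup_add_finrank_inf_eq l.val m.val
  rw [l.2, m.2, finrank_fin_fun] at *
  omega

theorem eq_of_mem_of_mem {p q : ProjPoint F} {l m : ProjLine F} (h : l ≠ m) (hpl : p ∈ l)
    (hpm : p ∈ m) (hql : q ∈ l) (hqm : q ∈ m) : p = q := by
  have key : ∀ r : ProjPoint F, r ∈ l → r ∈ m → r.val = l.val ⊓ m.val := fun r hl hm =>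
    eq_of_le_of_finrank_le (le_inf hl hm) (by rw [finrank_inf h, r.2])
  exact Subtype.ext ((key p hpl hpm).trans (key q hql hqm).symm)

theorem exists_not_mem (l : ProjLine F) : ∃ p : ProjPoint F, p ∉ l := by
  obtain ⟨x, hx⟩ : ∃ x, x ∉ l.val := by
    by_contra! h
    have := l.2
    rw [eq_top_iff'.2 h, finrank_top, finrank_fin_fun] at this
    omega
  exact ⟨ProjPoint.mk x fun h => hx (h ▸ l.val.zero_mem),
    fun h => hx (h (mem_span_singleton_self x))⟩

end ProjLine

theorem ProjPoint.exists_not_mem (p : ProjPoint F) : ∃ l : ProjLine F, p ∉ l := by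
  obtain ⟨x, hxp, hx⟩ := p.val.exists_mem_ne_zero_of_ne_bot fun h => by
    have := p.2
    rw [h, finrank_bot] at this
    omega
  obtain ⟨i, hi⟩ := Function.ne_iff.1 hx
  exact ⟨ProjLine.ofNormal (Pi.single i 1) (by simp),
    fun h => hi (by simpa [ProjLine.mem_ofNormal] using h hxp)⟩

noncomputable instance : ProjectivePlane (ProjPoint F) (ProjLine F) where
  mkPoint h := ⟨_, ProjLine.finrank_inf h⟩
  mkPoint_ax _ := ⟨inf_le_left, inf_le_right⟩
  mkLine h := ⟨_, ProjPoint.finrank_sup h⟩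
  mkLine_ax _ := ⟨le_sup_left, le_sup_right⟩
  eq_or_eq h₁₁ h₂₁ h₁₂ h₂₂ := or_iff_not_imp_right.2 fun h =>
    ProjLine.eq_of_mem_of_mem h h₁₁ h₁₂ h₂₁ h₂₂
  exists_point := ProjLine.exists_not_mem
  exists_line := ProjPoint.exists_not_mem
  exists_config := by
    refine ⟨ProjPoint.mk ![1, 0, 0] ?_, ProjPoint.mk ![0, 1, 0] ?_, ProjPoint.mk ![0, 0, 1] ?_,
      ProjLine.ofNormal ![0, 1, 1] ?_, ProjLine.ofNormal ![1, 0, 0] ?_,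
      ProjLine.ofNormal ![1, 0, 1] ?_, ?_⟩ <;>
    simp [ProjLine.mk_mem_ofNormal]

instance [Finite F] : Finite (ProjPoint F) :=
  inferInstanceAs (Finite {p : Submodule F (Fin 3 → F) // finrank F p = 1})

instance [Finite F] : Finite (ProjLine F) :=
  inferInstanceAs (Finite {l : Submodule F (Fin 3 → F) // finrank F l = 2})

theorem ProjLine.card_points [Finite F] (l : ProjLine F) :
    Nat.card {p : ProjPoint F // p ∈ l} = Nat.card F + 1 := calc
  _ = Nat.card {q : Submodule F l.val // finrank F q = 1} := by
    refine Nat.card_congr (Equiv.trans ?_ ((MapSubtype.orderIso l.val).toEquiv.subtypeEquiv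
      (q := fun H => finrank F H.val = 1) fun q => ?_).symm)
    · exact ⟨fun p => ⟨⟨p.1.1, p.2⟩, p.1.2⟩, fun x => ⟨⟨x.1.1, x.2⟩, x.1.2⟩, fun _ => rfl,
        fun _ => rfl⟩
    · exact (congrArg (· = 1) (finrank_map_subtype_eq l.val q)).symm.to_iff
  _ = Nat.card (ℙ F l.val) := Nat.card_congr (Projectivization.equivSubmodule F l.val).symm
  _ = Nat.card F + 1 := Projectivization.card_of_finrank_two F l.val l.2

theorem order_projPoint_projLine [Fintype F] :
    ProjectivePlane.order (ProjPoint F) (ProjLine F) = Fintype.card F := by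
  have := ProjectivePlane.pointCount_eq (ProjPoint F) (ProjLine.ofNormal (Pi.single 0 1) (by simp))
  rw [pointCount, ProjLine.card_points, Nat.card_eq_fintype_card] at this
  omega

end ProjectivePlaneOverField

open Configuration in
theorem isIncidenceEmbedding_incGraph :
    IsIncidenceEmbedding (incGraph F) (Sum.inl : ProjPoint F → _) Sum.inr where
  injective := by rw [Sum.elim_inl_inr]; exact injective_id
  adj_pt_ln p l := by simp [incGraph]; rfl
  not_adj_pt_pt p q := by simp [incGraph]
  not_adj_ln_ln l m := by simp [incGraph]

/-- The incidence graph of PG(2,q) is two-side `k`-pairable whenever `5k ≤ q + 4`. -/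
theorem incGraph_two_side_pairable (F : Type*) [Field F] [Fintype F] (k : ℕ)
    (hk : 5 * k ≤ Fintype.card F + 4) :
    (∀ u v : Fin k → ProjPoint F, Function.Injective (Sum.elim u v) →
      IsVertexMinor (pairingGraph (Sum.inl ∘ u) (Sum.inl ∘ v))
        (Set.range (Sum.inl ∘ u) ∪ Set.range (Sum.inl ∘ v)) (incGraph F) Set.univ) ∧
    (∀ u v : Fin k → ProjLine F, Function.Injective (Sum.elim u v) →
      IsVertexMinor (pairingGraph (Sum.inr ∘ u) (Sum.inr ∘ v))
        (Set.range (Sum.inr ∘ u) ∪ Set.range (Sum.inr ∘ v)) (incGraph F) Set.univ) := by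
  rw [← order_projPoint_projLine] at hk
  refine ⟨fun u v huv => ?_, fun u v huv => ?_⟩
  · exact (isIncidenceEmbedding_incGraph F).isVertexMinor_pairingGraph hk u v huv
  · exact (isIncidenceEmbedding_incGraph F).dual.isVertexMinor_pairingGraph
      (by rwa [Configuration.ProjectivePlane.Dual.order]) u v huv
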